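/- arXiv:1308.2849 — 2 statements merged into one kernel-verified Lean document; each statement's English description precedes it below -/
import Mathlib

section
/- For every element h of L and every χ ∈ 𝓕, the element p_h(χ) − (−1)^{|χ|} Π_{a ∈ supp χ} (h ⊗ a)^{(χ(a))} of U(L ⊗ A) lies in the subalgebra generated by {h ⊗ a : a ∈ A} and has degree at most |χ| − 1 (the factors h ⊗ a commute, so the product is well defined). -/
open scoped TensorProduct

noncomputable section

set_option linter.unusedSectionVars false
set_option linter.unusedVariables false

namespace MapSuper

variable (A : Type*) [DecidableEq A]

/-- `|χ|`, the total size of a finitely supported multiset `χ ∈ 𝓕 = (A →₀ ℕ)`. -/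
def wt (χ : A →₀ ℕ) : ℕ := χ.sum fun _ n => n

lemma wt_add (χ φ : A →₀ ℕ) : wt A (χ + φ) = wt A χ + wt A φ :=
  Finsupp.sum_add_index' (fun _ => rfl) (fun _ _ _ => rfl)

lemma wt_pos {ψ : A →₀ ℕ} (h : ψ ≠ 0) : 0 < wt A ψ := by
  rcases Nat.eq_zero_or_pos (wt A ψ) with h0 | h1
  · exfalso
    apply h
    ext a
    by_cases ha : a ∈ ψ.support
    · exact Finset.sum_eq_zero_iff.mp h0 a ha
    · simpa using Finsupp.notMem_support_iff.mp ha
  · exact h1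

lemma wt_sub_lt {χ ψ : A →₀ ℕ} (hle : ψ ≤ χ) (hne : ψ ≠ 0) : wt A (χ - ψ) < wt A χ := by
  have h1 : wt A (χ - ψ) + wt A ψ = wt A χ := by
    rw [← wt_add, tsub_add_cancel_of_le hle]
  have := wt_pos A hne
  omega

/-- The multinomial coefficient `m(ψ) = |ψ|! / ∏_a ψ(a)!`. -/
def mc (ψ : A →₀ ℕ) : ℕ := Nat.multinomial ψ.support ψ

variable [CommRing A] [Algebra ℂ A]
variable (L : Type*) [LieRing L] [LieAlgebra ℂ L]

/-- `π(ψ) = ∏_a a^{ψ(a)} ∈ A`. -/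
def piF (ψ : A →₀ ℕ) : A := ψ.prod fun a n => a ^ n

instance : LieAlgebra ℂ (A ⊗[ℂ] L) where
  lie_smul c x y := by
    rw [← algebraMap_smul A c y, lie_smul, algebraMap_smul]

/-- The universal enveloping algebra `U(L ⊗ A)` of the map Lie algebra `L ⊗ A`
(realized as `A ⊗[ℂ] L` with bracket `⁅x ⊗ a, y ⊗ b⁆ = ⁅x, y⁆ ⊗ ab`). -/
abbrev UEA := UniversalEnvelopingAlgebra ℂ (A ⊗[ℂ] L)

/-- The element `x ⊗ a` of `U(L ⊗ A)`. -/
def emb (x : L) (a : A) : UEA A L := UniversalEnvelopingAlgebra.ι ℂ (a ⊗ₜ[ℂ] x)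

/-- The divided power `u^{(r)} = u^r / r!`. -/
def dp (u : UEA A L) (r : ℕ) : UEA A L := ((r.factorial : ℂ)⁻¹) • u ^ r

/-- The elements `p_h(χ)`, defined recursively by `p_h(0) = 1` and, for `χ ≠ 0`,
`p_h(χ) = -(1/|χ|) ∑_{0 ≠ ψ ≤ χ} m(ψ) (h ⊗ π(ψ)) p_h(χ - ψ)`. -/
def p (h : L) (χ : A →₀ ℕ) : UEA A L :=
  if hχ : χ = 0 then 1
  else (-(1 / (wt A χ : ℂ))) •
    ∑ ψ ∈ ((Finset.Iic χ).erase 0).attach,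
      (mc A ψ.1 : ℂ) • (emb A L h (piF A ψ.1) * p h (χ - ψ.1))
termination_by wt A χ
decreasing_by
  have hm := ψ.2
  rw [Finset.mem_erase, Finset.mem_Iic] at hm
  exact wt_sub_lt A hm.2 hm.1

section

attribute [local instance 100] LieRing.ofAssociativeRing

lemma commute_emb {x y : L} (hxy : ⁅x, y⁆ = 0) (a b : A) :
    Commute (emb A L x a) (emb A L y b) := by
  unfold emb
  rw [commute_iff_lie_eq, ← LieHom.map_lie, LieAlgebra.ExtendScalars.bracket_tmul, hxy,
    TensorProduct.tmul_zero, map_zero]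

end

lemma commute_dp {x y : L} (hxy : ⁅x, y⁆ = 0) (a b : A) (r s : ℕ) :
    Commute (dp A L (emb A L x a) r) (dp A L (emb A L y b) s) :=
  (((commute_emb A L hxy a b).pow_pow r s).smul_left _).smul_right _

lemma commute_smul_dp {x y : L} (hxy : ⁅x, y⁆ = 0) (c d : ℂ) (a b : A) (r s : ℕ) :
    Commute (dp A L (c • emb A L x a) r) (dp A L (d • emb A L y b) s) :=
  (((((commute_emb A L hxy a b).smul_left c).smul_right d).pow_pow r s).smul_left _).smul_right _

lemma commute_smul_dp' {x y : L} (hxy : ⁅x, y⁆ = 0) (c d : ℂ) (a b : A) (r s : ℕ) :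
    Commute (c • dp A L (emb A L x a) r) (d • dp A L (emb A L y b) s) :=
  ((commute_dp A L hxy a b r s).smul_left c).smul_right d

/-- The submodule of elements of `U(L ⊗ A)` of degree at most `n`: the image, under the
canonical map `T(L ⊗ A) → U(L ⊗ A)`, of the sum of the homogeneous components of the tensor
algebra of degree at most `n`. -/
def degLE (n : ℕ) : Submodule ℂ (UEA A L) :=
  Submodule.map (UniversalEnvelopingAlgebra.mkAlgHom ℂ (A ⊗[ℂ] L)).toLinearMap
    (⨆ i ∈ Set.Iic n,
      (LinearMap.range (TensorAlgebra.ι ℂ : (A ⊗[ℂ] L) →ₗ[ℂ] TensorAlgebra ℂ (A ⊗[ℂ] L))) ^ i)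

/-- `C(z, k) = z(z-1)⋯(z-k+1)/k!`. -/
def intC (z : ℤ) (k : ℕ) : ℂ :=
  (∏ i ∈ Finset.range k, ((z : ℂ) - (i : ℂ))) / (k.factorial : ℂ)

/-- Garland's elements `D^x_{j,k}(d, c) = ∑_{λ ∈ 𝓟_k(j)} ∏_{m ∈ supp λ} (x ⊗ d^m c)^{(λ(m))}`,
where `𝓟_k(j)` is the set of finitely supported `λ : ℕ → ℕ` with `∑_m λ(m)·m = j` and
`∑_m λ(m) = k`. -/
def D (x : L) (j k : ℕ) (d c : A) : UEA A L :=
  ∑ᶠ (lam : ℕ →₀ ℕ) (_ : lam.sum (fun m t => t * m) = j ∧ lam.sum (fun _ t => t) = k),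
    lam.support.noncommProd (fun m => dp A L (emb A L x (d ^ m * c)) (lam m))
      (fun m _ m' _ _ => commute_dp A L (lie_self x) _ _ _ _)


-- ===== auxiliary development =====

section Auxiliary

variable (h : L)

/-! ### Degree filtration lemmas -/

lemma degLE_mono {m n : ℕ} (hmn : m ≤ n) : degLE A L m ≤ degLE A L n :=
  Submodule.map_mono <| iSup_mono fun i => iSup_mono' fun hi => ⟨le_trans hi hmn, le_rfl⟩

lemma one_mem_degLE (n : ℕ) : (1 : UEA A L) ∈ degLE A L n := by
  refine ⟨1, ?_, by simp⟩
  have h1 : (1 : TensorAlgebra ℂ (A ⊗[ℂ] L)) ∈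
      (LinearMap.range (TensorAlgebra.ι ℂ : (A ⊗[ℂ] L) →ₗ[ℂ] TensorAlgebra ℂ (A ⊗[ℂ] L))) ^ 0 := by
    rw [pow_zero]
    exact Submodule.one_le.mp le_rfl
  exact le_iSup₂ (f := fun i (_ : i ∈ Set.Iic n) =>
    (LinearMap.range (TensorAlgebra.ι ℂ : (A ⊗[ℂ] L) →ₗ[ℂ] TensorAlgebra ℂ (A ⊗[ℂ] L))) ^ i)
    0 (Nat.zero_le n) h1

lemma mul_mem_degLE {u v : UEA A L} {m n : ℕ} (hu : u ∈ degLE A L m) (hv : v ∈ degLE A L n) :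
    u * v ∈ degLE A L (m + n) := by
  set R := (LinearMap.range (TensorAlgebra.ι ℂ : (A ⊗[ℂ] L) →ₗ[ℂ] TensorAlgebra ℂ (A ⊗[ℂ] L)))
  obtain ⟨x, hx, rfl⟩ := hu
  obtain ⟨y, hy, rfl⟩ := hv
  refine ⟨x * y, ?_, by simp [AlgHom.toLinearMap_apply, map_mul]⟩
  have hle : (⨆ i ∈ Set.Iic m, R ^ i) * (⨆ j ∈ Set.Iic n, R ^ j) ≤
      ⨆ k ∈ Set.Iic (m + n), R ^ k := by
    rw [Submodule.iSup_mul]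
    refine iSup_le fun i => ?_
    rw [Submodule.iSup_mul]
    refine iSup_le fun hi => ?_
    rw [Submodule.mul_iSup]
    refine iSup_le fun j => ?_
    rw [Submodule.mul_iSup]
    refine iSup_le fun hj => ?_
    rw [← pow_add]
    exact le_iSup₂ (f := fun k (_ : k ∈ Set.Iic (m + n)) => R ^ k) (i + j) (Set.mem_Iic.mpr (add_le_add (Set.mem_Iic.mp hi) (Set.mem_Iic.mp hj)))
  exact hle (Submodule.mul_mem_mul hx hy)

lemma emb_mem_degLE_one (a : A) : emb A L h a ∈ degLE A L 1 := by
  refine ⟨TensorAlgebra.ι ℂ (a ⊗ₜ[ℂ] h), ?_, rfl⟩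
  have h1 : TensorAlgebra.ι ℂ (a ⊗ₜ[ℂ] h) ∈
      (LinearMap.range (TensorAlgebra.ι ℂ : (A ⊗[ℂ] L) →ₗ[ℂ] TensorAlgebra ℂ (A ⊗[ℂ] L))) ^ 1 := by
    rw [pow_one]
    exact ⟨_, rfl⟩
  exact le_iSup₂ (f := fun i (_ : i ∈ Set.Iic 1) =>
    (LinearMap.range (TensorAlgebra.ι ℂ : (A ⊗[ℂ] L) →ₗ[ℂ] TensorAlgebra ℂ (A ⊗[ℂ] L))) ^ i)
    1 le_rfl h1

lemma dp_emb_mem_degLE (a : A) (r : ℕ) : dp A L (emb A L h a) r ∈ degLE A L r := by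
  refine Submodule.smul_mem _ _ ?_
  induction r with
  | zero => simpa using one_mem_degLE A L 0
  | succ k ih => rw [pow_succ]; exact mul_mem_degLE A L ih (emb_mem_degLE_one A L h a)

end Auxiliary

section Comm
set_option synthInstance.maxHeartbeats 1000000
set_option maxHeartbeats 1000000

variable (h : L)

/-- The (commutative) subalgebra generated by the `h ⊗ a`. -/
abbrev SAlg : Subalgebra ℂ (UEA A L) := Algebra.adjoin ℂ (Set.range fun a : A => emb A L h a)

noncomputable instance : CommRing (SAlg A L h) :=
  Algebra.adjoinCommRingOfComm ℂ (by
    rintro x ⟨a, rfl⟩ y ⟨b, rfl⟩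
    exact (commute_emb A L (lie_self h) a b).eq)

/-- `h ⊗ a` as an element of the subalgebra. -/
def eS (a : A) : SAlg A L h := ⟨emb A L h a, Algebra.subset_adjoin ⟨a, rfl⟩⟩

/-- divided powers inside the subalgebra -/
def dpS (a : A) (r : ℕ) : SAlg A L h := ((r.factorial : ℂ)⁻¹) • eS A L h a ^ r

lemma dpS_coe (a : A) (r : ℕ) : (dpS A L h a r : UEA A L) = dp A L (emb A L h a) r := by
  simp [dpS, dp, eS]

/-- the product `∏_{a ∈ supp χ} (h ⊗ a)^{(χ(a))}` inside the subalgebra -/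
def NS (χ : A →₀ ℕ) : SAlg A L h := ∏ a ∈ χ.support, dpS A L h a (χ a)

lemma NS_coe (χ : A →₀ ℕ) :
    (NS A L h χ : UEA A L) =
      χ.support.noncommProd (fun a => dp A L (emb A L h a) (χ a))
        (fun a _ b _ _ => commute_dp A L (lie_self h) a b (χ a) (χ b)) := by
  have e1 : NS A L h χ = χ.support.noncommProd (fun a => dpS A L h a (χ a))
      (fun a _ b _ _ => Commute.all _ _) := (Finset.noncommProd_eq_prod _ _).symm
  rw [e1]
  have e2 := Finset.map_noncommProd χ.support (fun a => dpS A L h a (χ a))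
      (fun a _ b _ _ => Commute.all _ _) (SAlg A L h).val
  refine e2.trans (Finset.noncommProd_congr rfl (fun a _ => dpS_coe A L h a (χ a)) _)

lemma NS_zero : NS A L h 0 = 1 := by simp [NS]

lemma p_zero : p A L h 0 = 1 := by rw [p]; simp

lemma p_mem (χ : A →₀ ℕ) : p A L h χ ∈ SAlg A L h := by
  rw [p]
  split_ifs with hχ
  · exact one_mem _
  · refine Subalgebra.smul_mem _ (Subalgebra.sum_mem _ fun ψ hψ =>
      Subalgebra.smul_mem _ (mul_mem (Algebra.subset_adjoin (Set.mem_range_self (piF A ψ.1))) ?_) _) _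
    have hm := ψ.2
    rw [Finset.mem_erase, Finset.mem_Iic] at hm
    have : wt A (χ - ψ.1) < wt A χ := wt_sub_lt A hm.2 hm.1
    exact p_mem (χ - ψ.1)
termination_by wt A χ

/-- `p χ` as an element of the subalgebra. -/
def pS (χ : A →₀ ℕ) : SAlg A L h := ⟨p A L h χ, p_mem A L h χ⟩

end Comm

section Main
set_option synthInstance.maxHeartbeats 1000000
set_option maxHeartbeats 2000000

variable (h : L)

lemma wt_zero : wt A (0 : A →₀ ℕ) = 0 := by simp [wt]

lemma wt_single (a : A) : wt A (Finsupp.single a 1) = 1 := by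
  rw [wt, Finsupp.sum_single_index]; rfl

lemma wt_eq_one_iff {ψ : A →₀ ℕ} : wt A ψ = 1 ↔ ∃ a, ψ = Finsupp.single a 1 := by
  constructor
  · intro h1
    have hne : ψ ≠ 0 := by rintro rfl; rw [wt_zero] at h1; omega
    have hsum : ∑ a ∈ ψ.support, ψ a = 1 := h1
    have hcard : ψ.support.card ≤ 1 := by
      calc ψ.support.card = ∑ _a ∈ ψ.support, 1 := by simp
        _ ≤ ∑ a ∈ ψ.support, ψ a := Finset.sum_le_sum
            (fun a ha => Nat.one_le_iff_ne_zero.mpr (Finsupp.mem_support_iff.mp ha))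
        _ = 1 := hsum
    have hpos : 0 < ψ.support.card :=
      Finset.card_pos.mpr (Finsupp.support_nonempty_iff.mpr hne)
    obtain ⟨a, hsa⟩ := Finset.card_eq_one.mp (le_antisymm hcard hpos)
    refine ⟨a, ?_⟩
    have h2 : ψ a = 1 := by
      have : wt A ψ = ψ a := by rw [wt, Finsupp.sum, hsa, Finset.sum_singleton]
      omega
    have h3 := (Finsupp.support_eq_singleton.mp hsa).2
    rw [h3, h2]
  · rintro ⟨a, rfl⟩; exact wt_single A a

lemma dpS_zero (a : A) : dpS A L h a 0 = 1 := by simp [dpS]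

lemma eS_mul_dpS (a : A) {k : ℕ} (hk : k ≠ 0) :
    eS A L h a * dpS A L h a (k - 1) = (k : ℂ) • dpS A L h a k := by
  rw [dpS, dpS, mul_smul_comm, smul_smul]
  have hpow : eS A L h a * eS A L h a ^ (k - 1) = eS A L h a ^ k := by
    rw [← pow_succ', Nat.sub_add_cancel (Nat.one_le_iff_ne_zero.mpr hk)]
  rw [hpow]
  congr 1
  have hfac : (k : ℂ) * ((k - 1).factorial : ℂ) = (k.factorial : ℂ) := by
    rw [← Nat.mul_factorial_pred hk]; push_cast; ring
  have h1 : ((k - 1).factorial : ℂ) ≠ 0 := Nat.cast_ne_zero.mpr (Nat.factorial_ne_zero _)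
  have hk0 : (k : ℂ) ≠ 0 := Nat.cast_ne_zero.mpr hk
  rw [← hfac]
  field_simp

lemma key (χ : A →₀ ℕ) (a : A) (ha : a ∈ χ.support) :
    eS A L h a * NS A L h (χ - Finsupp.single a 1) = (χ a : ℂ) • NS A L h χ := by
  have hka : χ a ≠ 0 := Finsupp.mem_support_iff.mp ha
  set φ := χ - Finsupp.single a 1 with hφ
  have hφa : φ a = χ a - 1 := by
    simp [hφ, Finsupp.sub_apply, Finsupp.single_apply]
  have hφb : ∀ b, b ≠ a → φ b = χ b := fun b hb => by
    simp [hφ, Finsupp.sub_apply, Finsupp.single_apply, Ne.symm hb]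
  have hsub : φ.support ⊆ χ.support := fun b hb => by
    rw [Finsupp.mem_support_iff] at hb ⊢
    intro h0
    rcases eq_or_ne b a with rfl | hba
    · rw [hφa] at hb; omega
    · exact hb ((hφb b hba).trans h0)
  have e1 : NS A L h φ = ∏ b ∈ χ.support, dpS A L h b (φ b) := by
    rw [NS]
    exact Finset.prod_subset hsub (fun b _ hnb => by
      rw [Finsupp.notMem_support_iff.mp hnb, dpS_zero])
  rw [e1, ← Finset.mul_prod_erase _ _ ha, ← mul_assoc, hφa,
    eS_mul_dpS A L h a hka, smul_mul_assoc]
  congr 1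
  rw [NS, ← Finset.mul_prod_erase _ _ ha]
  congr 1
  exact Finset.prod_congr rfl (fun b hb => by rw [hφb b (Finset.ne_of_mem_erase hb)])

lemma noncommProd_dp_mem (k : A →₀ ℕ) (t : Finset A) :
    t.noncommProd (fun a => dp A L (emb A L h a) (k a))
      (fun a _ b _ _ => commute_dp A L (lie_self h) a b (k a) (k b)) ∈
      degLE A L (∑ a ∈ t, k a) := by
  induction t using Finset.induction_on with
  | empty => erw [Finset.noncommProd_empty, Finset.sum_empty]; exact one_mem_degLE A L 0
  | @insert a t ha ih =>
    erw [Finset.noncommProd_insert_of_notMem _ _ _ _ ha, Finset.sum_insert ha]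
    exact mul_mem_degLE A L (dp_emb_mem_degLE A L h a (k a)) ih

lemma NS_mem (χ : A →₀ ℕ) : (NS A L h χ : UEA A L) ∈ degLE A L (wt A χ) := by
  rw [NS_coe]
  exact noncommProd_dp_mem A L h χ χ.support

lemma main (h : L) (χ : A →₀ ℕ) :
    p A L h χ - ((-1 : ℂ) ^ wt A χ) • (NS A L h χ : UEA A L) ∈ degLE A L (wt A χ - 1) := by
  by_cases hχ : χ = 0
  · subst hχ
    rw [p_zero, NS_zero, wt_zero]
    simpa using Submodule.zero_mem _
  · have hn1 : 1 ≤ wt A χ := wt_pos A hχ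
    rw [p, dif_neg hχ]
    set s : Finset (A →₀ ℕ) := (Finset.Iic χ).erase 0 with hs
    have hmem : ∀ ψ ∈ s, ψ ≠ 0 ∧ ψ ≤ χ := fun ψ hψ => by
      rw [hs, Finset.mem_erase, Finset.mem_Iic] at hψ; exact hψ
    have hwtsub : ∀ ψ ∈ s, wt A (χ - ψ) + wt A ψ = wt A χ := fun ψ hψ => by
      rw [← wt_add, tsub_add_cancel_of_le (hmem ψ hψ).2]
    rw [Finset.sum_attach s
      (fun ψ => (mc A ψ : ℂ) • (emb A L h (piF A ψ) * p A L h (χ - ψ)))]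
    set G : (A →₀ ℕ) → UEA A L := fun ψ =>
      (mc A ψ : ℂ) • (emb A L h (piF A ψ) *
        (((-1 : ℂ) ^ wt A (χ - ψ)) • (NS A L h (χ - ψ) : UEA A L))) with hG
    have hterm : ∀ ψ ∈ s,
        (mc A ψ : ℂ) • (emb A L h (piF A ψ) * p A L h (χ - ψ)) - G ψ ∈
          degLE A L (wt A χ - 1) := by
      intro ψ hψ
      have hrec : p A L h (χ - ψ) -
          ((-1 : ℂ) ^ wt A (χ - ψ)) • (NS A L h (χ - ψ) : UEA A L) ∈
          degLE A L (wt A (χ - ψ) - 1) := main h (χ - ψ)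
      have hre : (mc A ψ : ℂ) • (emb A L h (piF A ψ) * p A L h (χ - ψ)) - G ψ
          = (mc A ψ : ℂ) • (emb A L h (piF A ψ) *
            (p A L h (χ - ψ) - ((-1 : ℂ) ^ wt A (χ - ψ)) • (NS A L h (χ - ψ) : UEA A L))) := by
        simp only [hG]
        rw [← smul_sub, ← mul_sub]
      rw [hre]
      refine Submodule.smul_mem _ _ ?_
      rcases eq_or_ne (χ - ψ) 0 with hz | hz
      · rw [hz, p_zero, NS_zero, wt_zero]
        simpa using Submodule.zero_mem _
      · have h1 : 1 ≤ wt A (χ - ψ) := wt_pos A hz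
        have h2 := hwtsub ψ hψ
        have h3 : 1 ≤ wt A ψ := wt_pos A (hmem ψ hψ).1
        have hm := mul_mem_degLE A L (emb_mem_degLE_one A L h (piF A ψ)) hrec
        exact degLE_mono A L (by omega) hm
    have hbig : ∀ ψ ∈ s.filter (fun ψ => ¬ wt A ψ = 1), G ψ ∈ degLE A L (wt A χ - 1) := by
      intro ψ hψ
      rw [Finset.mem_filter] at hψ
      obtain ⟨hψs, hw1⟩ := hψ
      have h2 := hwtsub ψ hψs
      have h3 : 2 ≤ wt A ψ := by
        have := wt_pos A (hmem ψ hψs).1; omega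
      simp only [hG]
      refine Submodule.smul_mem _ _ ?_
      have hm := mul_mem_degLE A L (emb_mem_degLE_one A L h (piF A ψ))
        (Submodule.smul_mem _ ((-1:ℂ) ^ wt A (χ - ψ)) (NS_mem A L h (χ - ψ)))
      exact degLE_mono A L (by omega) hm
    have himg : s.filter (fun ψ => wt A ψ = 1) =
        χ.support.image (fun a => Finsupp.single a 1) := by
      ext ψ
      simp only [Finset.mem_filter, hs, Finset.mem_erase, Finset.mem_Iic, Finset.mem_image]
      constructor
      · rintro ⟨⟨hne, hle⟩, h1⟩
        obtain ⟨a, rfl⟩ := (wt_eq_one_iff A).mp h1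
        refine ⟨a, ?_, rfl⟩
        rw [Finsupp.mem_support_iff]
        have := Finsupp.single_le_iff.mp hle
        omega
      · rintro ⟨a, ha, rfl⟩
        refine ⟨⟨fun hz => one_ne_zero (Finsupp.single_eq_zero.mp hz), Finsupp.single_le_iff.mpr ?_⟩,
          wt_single A a⟩
        rw [Finsupp.mem_support_iff] at ha; omega
    have hsing : ∀ a ∈ χ.support, G (Finsupp.single a 1) =
        ((-1 : ℂ) ^ (wt A χ - 1) * (χ a : ℂ)) • (NS A L h χ : UEA A L) := by
      intro a ha
      have hka : χ a ≠ 0 := Finsupp.mem_support_iff.mp ha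
      have hmc : mc A (Finsupp.single a 1) = 1 := by
        rw [mc, Finsupp.support_single_ne_zero a one_ne_zero]
        exact Nat.multinomial_singleton a _
      have hpi : piF A (Finsupp.single a 1) = a := by
        rw [piF, Finsupp.prod_single_index (by simp), pow_one]
      have hwt : wt A (χ - Finsupp.single a 1) = wt A χ - 1 := by
        have hle : Finsupp.single a 1 ≤ χ := Finsupp.single_le_iff.mpr (by omega)
        have e : wt A (χ - Finsupp.single a 1) + wt A (Finsupp.single a 1) = wt A χ := by
          rw [← wt_add, tsub_add_cancel_of_le hle]
        rw [wt_single] at e; omega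
      have hkey : emb A L h a * (NS A L h (χ - Finsupp.single a 1) : UEA A L)
          = (χ a : ℂ) • (NS A L h χ : UEA A L) := by
        have hk := congrArg Subtype.val (key A L h χ a ha)
        simpa [eS] using hk
      simp only [hG, hmc, hpi, hwt, Nat.cast_one, one_smul, one_mul, mul_smul_comm, hkey, smul_smul]
    have hn0 : (wt A χ : ℂ) ≠ 0 := by
      exact_mod_cast (by omega : wt A χ ≠ 0)
    have hsum1 : ∑ ψ ∈ s.filter (fun ψ => wt A ψ = 1), G ψ =
        ((-1 : ℂ) ^ (wt A χ - 1) * (wt A χ : ℂ)) • (NS A L h χ : UEA A L) := by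
      rw [himg, Finset.sum_image
        (fun x _ y _ hxy => Finsupp.single_left_injective one_ne_zero hxy)]
      rw [Finset.sum_congr rfl (hsing), ← Finset.sum_smul]
      congr 1
      rw [← Finset.mul_sum]
      congr 1
      rw [show wt A χ = ∑ a ∈ χ.support, χ a from rfl]
      exact (Nat.cast_sum _ _).symm
    have hfin : (-(1 / (wt A χ : ℂ))) • ∑ ψ ∈ s.filter (fun ψ => wt A ψ = 1), G ψ
        = ((-1 : ℂ) ^ wt A χ) • (NS A L h χ : UEA A L) := by
      rw [hsum1, smul_smul]
      congr 1
      have hrw : (-1 : ℂ) ^ wt A χ = (-1 : ℂ) ^ (wt A χ - 1) * (-1) := by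
        conv_lhs => rw [show wt A χ = (wt A χ - 1) + 1 from by omega]
        rw [pow_succ]
      rw [hrw]
      field_simp
    have split : (∑ ψ ∈ s, (mc A ψ : ℂ) • (emb A L h (piF A ψ) * p A L h (χ - ψ)))
        = ((∑ ψ ∈ s, ((mc A ψ : ℂ) • (emb A L h (piF A ψ) * p A L h (χ - ψ)) - G ψ))
          + ∑ ψ ∈ s.filter (fun ψ => ¬ wt A ψ = 1), G ψ)
          + ∑ ψ ∈ s.filter (fun ψ => wt A ψ = 1), G ψ := by
      rw [Finset.sum_sub_distrib]
      rw [add_assoc, add_comm (∑ ψ ∈ s.filter (fun ψ => ¬ wt A ψ = 1), G ψ),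
        Finset.sum_filter_add_sum_filter_not]
      abel
    rw [split, smul_add, smul_add, hfin, add_sub_cancel_right]
    exact add_mem (Submodule.smul_mem _ _ (Submodule.sum_mem _ hterm))
      (Submodule.smul_mem _ _ (Submodule.sum_mem _ hbig))
termination_by wt A χ
decreasing_by exact wt_sub_lt A (hmem ψ hψ).2 (hmem ψ hψ).1

end Main

/-- `p_h(χ) - (-1)^{|χ|} ∏_{a ∈ supp χ} (h ⊗ a)^{(χ(a))}` lies in the subalgebra
generated by `{h ⊗ a : a ∈ A}` and has degree at most `|χ| - 1`. -/
theorem stmt1 (h : L) (χ : A →₀ ℕ) :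
    (p A L h χ - ((-1 : ℂ) ^ wt A χ) •
        χ.support.noncommProd (fun a => dp A L (emb A L h a) (χ a))
          (fun a _ b _ _ => commute_dp A L (lie_self h) a b (χ a) (χ b)) ∈
      Algebra.adjoin ℂ (Set.range fun a : A => emb A L h a)) ∧
    p A L h χ - ((-1 : ℂ) ^ wt A χ) •
        χ.support.noncommProd (fun a => dp A L (emb A L h a) (χ a))
          (fun a _ b _ _ => commute_dp A L (lie_self h) a b (χ a) (χ b)) ∈
      degLE A L (wt A χ - 1) := by
  constructor
  · rw [← NS_coe A L h χ]
    exact sub_mem (p_mem A L h χ) (Subalgebra.smul_mem _ (NS A L h χ).2 _)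
  · rw [← NS_coe A L h χ]
    exact main A L h χ

end MapSuper
end
end

section
/- Let x, y, z₁, …, z_t ∈ L and integers c₁, …, c_t satisfy [x, y] = Σ_{v=1}^t c_v z_v, [x, z_v] = 0, [y, z_v] = 0, and [z_v, z_w] = 0 for all v, w. Then for all a, b ∈ A and r, s ∈ ℤ_{≥0}, the following identity holds in U(L ⊗ A): (x ⊗ a)^{(r)} (y ⊗ b)^{(s)} = Σ_{j=0}^{min(r,s)} (y ⊗ b)^{(s−j)} ( Σ_{ψ : [t]→ℤ_{≥0}, Σ_v ψ(v) = j} Π_{v=1}^t c_v^{ψ(v)} (z_v ⊗ ab)^{(ψ(v))} ) (x ⊗ a)^{(r−j)} (the factors z_v ⊗ ab commute, so the products are well defined). -/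
open scoped TensorProduct

noncomputable section

set_option linter.unusedSectionVars false
set_option linter.unusedVariables false

namespace MapSuper

variable (A : Type*) [DecidableEq A]

variable [CommRing A] [Algebra ℂ A]
variable (L : Type*) [LieRing L] [LieAlgebra ℂ L]

attribute [local instance 100] LieRing.ofAssociativeRing

section AuxRing

variable {R : Type*} [Ring R]

lemma aux_pow_mul (X Y W : R) (hXY : X * Y = Y * X + W) (hXW : Commute X W) :
    ∀ m : ℕ, X ^ m * Y = Y * X ^ m + m • (W * X ^ (m - 1)) := by
  intro m
  induction m with
  | zero => simp
  | succ m ih =>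
    have h1 : X ^ (m + 1) * Y = X * (X ^ m * Y) := by rw [pow_succ', mul_assoc]
    rw [h1, ih, mul_add, ← mul_assoc, hXY, add_mul, mul_assoc Y, ← pow_succ',
      mul_smul_comm]
    have h2 : m • (X * (W * X ^ (m - 1))) = m • (W * X ^ m) := by
      cases m with
      | zero => simp
      | succ k =>
        simp only [Nat.add_sub_cancel]
        rw [← mul_assoc, hXW.eq, mul_assoc, ← pow_succ']
    rw [h2, succ_nsmul]
    abel_nf
    rw [add_comm (W * X ^ m)]

lemma aux_key (X Y W : R) (hXY : X * Y = Y * X + W) (hXW : Commute X W)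
    (hYW : Commute Y W) (r : ℕ) : ∀ s : ℕ, X ^ r * Y ^ s =
      ∑ j ∈ Finset.range (s + 1),
        (r.choose j * s.choose j * j.factorial) •
          (Y ^ (s - j) * W ^ j * X ^ (r - j)) := by
  intro s
  induction s with
  | zero => simp
  | succ s ih =>
    have step : ∀ j, j ≤ s → (Y ^ (s - j) * W ^ j * X ^ (r - j)) * Y
        = Y ^ (s + 1 - j) * W ^ j * X ^ (r - j)
          + (r - j) • (Y ^ (s + 1 - (j + 1)) * W ^ (j + 1) * X ^ (r - (j + 1))) := by
      intro j hj
      have e1 : s + 1 - j = (s - j) + 1 := by omega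
      have e2 : s + 1 - (j + 1) = s - j := by omega
      have e3 : r - (j + 1) = r - j - 1 := by omega
      rw [e1, e2, e3, mul_assoc, aux_pow_mul X Y W hXY hXW, mul_add, mul_smul_comm,
        pow_succ]
      congr 1
      · rw [← mul_assoc, mul_assoc (Y ^ (s - j)) (W ^ j) Y,
          ((hYW.pow_right j).symm).eq, ← mul_assoc]
      · congr 1
        rw [mul_assoc, ← mul_assoc (W ^ j) W, ← pow_succ, ← mul_assoc]
    have coef : ∀ j : ℕ,
        r.choose (j + 1) * s.choose (j + 1) * (j + 1).factorial
          + r.choose j * s.choose j * j.factorial * (r - j)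
        = r.choose (j + 1) * (s + 1).choose (j + 1) * (j + 1).factorial := by
      intro j
      have h2 : r.choose (j + 1) * (j + 1).factorial
          = r.choose j * (r - j) * j.factorial := by
        rw [Nat.factorial_succ, ← mul_assoc, Nat.choose_succ_right_eq]
      rw [Nat.choose_succ_succ, Nat.mul_add, Nat.add_mul]
      have h3 : r.choose j * s.choose j * j.factorial * (r - j)
          = r.choose (j + 1) * s.choose j * (j + 1).factorial := by
        calc r.choose j * s.choose j * j.factorial * (r - j)
            = s.choose j * (r.choose j * (r - j) * j.factorial) := by ring
          _ = s.choose j * (r.choose (j + 1) * (j + 1).factorial) := by rw [← h2]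
          _ = r.choose (j + 1) * s.choose j * (j + 1).factorial := by ring
      rw [h3]
      ring
    calc X ^ r * Y ^ (s + 1) = (X ^ r * Y ^ s) * Y := by rw [pow_succ, ← mul_assoc]
      _ = ∑ j ∈ Finset.range (s + 1),
            (r.choose j * s.choose j * j.factorial) •
              ((Y ^ (s - j) * W ^ j * X ^ (r - j)) * Y) := by
          rw [ih, Finset.sum_mul]
          simp only [smul_mul_assoc]
      _ = ∑ j ∈ Finset.range (s + 1),
            ((r.choose j * s.choose j * j.factorial) •
                (Y ^ (s + 1 - j) * W ^ j * X ^ (r - j))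
              + (r.choose j * s.choose j * j.factorial * (r - j)) •
                (Y ^ (s + 1 - (j + 1)) * W ^ (j + 1) * X ^ (r - (j + 1)))) := by
          refine Finset.sum_congr rfl fun j hj => ?_
          rw [step j (Nat.lt_succ_iff.mp (Finset.mem_range.mp hj)), smul_add,
            smul_smul]
      _ = (∑ j ∈ Finset.range (s + 1),
            (r.choose j * s.choose j * j.factorial) •
              (Y ^ (s + 1 - j) * W ^ j * X ^ (r - j)))
          + ∑ j ∈ Finset.range (s + 1),
            (r.choose j * s.choose j * j.factorial * (r - j)) •
              (Y ^ (s + 1 - (j + 1)) * W ^ (j + 1) * X ^ (r - (j + 1))) :=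
          Finset.sum_add_distrib
      _ = ∑ j ∈ Finset.range (s + 1 + 1),
            (r.choose j * (s + 1).choose j * j.factorial) •
              (Y ^ (s + 1 - j) * W ^ j * X ^ (r - j)) := by
          have hext : (∑ j ∈ Finset.range (s + 1),
              (r.choose j * s.choose j * j.factorial) •
                (Y ^ (s + 1 - j) * W ^ j * X ^ (r - j)))
            = ∑ j ∈ Finset.range (s + 1 + 1),
              (r.choose j * s.choose j * j.factorial) •
                (Y ^ (s + 1 - j) * W ^ j * X ^ (r - j)) := by
            rw [Finset.sum_range_succ (fun j => (r.choose j * s.choose j * j.factorial) •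
                (Y ^ (s + 1 - j) * W ^ j * X ^ (r - j))) (s + 1)]
            simp [Nat.choose_succ_self]
          rw [hext, Finset.sum_range_succ' (fun j => (r.choose j * s.choose j * j.factorial) •
              (Y ^ (s + 1 - j) * W ^ j * X ^ (r - j))) (s + 1),
            Finset.sum_range_succ' (fun j => (r.choose j * (s + 1).choose j * j.factorial) •
              (Y ^ (s + 1 - j) * W ^ j * X ^ (r - j))) (s + 1)]
          rw [add_right_comm]
          congr 1
          · rw [← Finset.sum_add_distrib]
            refine Finset.sum_congr rfl fun j hj => ?_
            rw [← add_smul, coef j]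
          · simp

end AuxRing
lemma commute_dp_of_commute {u w : UEA A L} (h : Commute u w) (r s : ℕ) :
    Commute (dp A L u r) (dp A L w s) :=
  ((h.pow_pow r s).smul_left _).smul_right _

lemma dp_straight (X Y W : UEA A L) (hXY : X * Y = Y * X + W) (hXW : Commute X W)
    (hYW : Commute Y W) (r s : ℕ) :
    dp A L X r * dp A L Y s =
      ∑ j ∈ Finset.range (min r s + 1),
        dp A L Y (s - j) * dp A L W j * dp A L X (r - j) := by
  unfold dp
  rw [smul_mul_assoc, mul_smul_comm, smul_smul, aux_key X Y W hXY hXW hYW r s,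
    Finset.smul_sum]
  have hsub : Finset.range (min r s + 1) ⊆ Finset.range (s + 1) :=
    Finset.range_subset_range.mpr (by omega)
  rw [← Finset.sum_subset hsub (fun j hj hj' => ?_)]
  · refine Finset.sum_congr rfl fun j hj => ?_
    have hjm : j ≤ min r s := Nat.lt_succ_iff.mp (Finset.mem_range.mp hj)
    have hjr : j ≤ r := le_trans hjm (min_le_left _ _)
    have hjs : j ≤ s := le_trans hjm (min_le_right _ _)
    simp only [← Nat.cast_smul_eq_nsmul ℂ, smul_mul_assoc, mul_smul_comm, smul_smul]
    congr 1
    have hr0 : ((r.factorial : ℂ)) ≠ 0 := Nat.cast_ne_zero.mpr r.factorial_ne_zero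
    have hs0 : ((s.factorial : ℂ)) ≠ 0 := Nat.cast_ne_zero.mpr s.factorial_ne_zero
    have hj0 : ((j.factorial : ℂ)) ≠ 0 := Nat.cast_ne_zero.mpr j.factorial_ne_zero
    have hrj0 : (((r - j).factorial : ℂ)) ≠ 0 := Nat.cast_ne_zero.mpr (r - j).factorial_ne_zero
    have hsj0 : (((s - j).factorial : ℂ)) ≠ 0 := Nat.cast_ne_zero.mpr (s - j).factorial_ne_zero
    push_cast
    rw [Nat.cast_choose ℂ hjr, Nat.cast_choose ℂ hjs]
    field_simp
  · have hjr : r < j := by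
      have h1 := Finset.mem_range.mp hj
      have h2 : ¬ j < min r s + 1 := fun h => hj' (Finset.mem_range.mpr h)
      omega
    rw [Nat.choose_eq_zero_of_lt hjr]
    simp

lemma noncommProd_smul {ι : Type*} (s : Finset ι) (sc : ι → ℂ) (x : ι → UEA A L)
    (h : (s : Set ι).Pairwise (Function.onFun Commute fun v => sc v • x v))
    (h2 : (s : Set ι).Pairwise (Function.onFun Commute x)) :
    s.noncommProd (fun v => sc v • x v) h = (∏ v ∈ s, sc v) • s.noncommProd x h2 := by
  classical
  induction s using Finset.cons_induction with
  | empty => simp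
  | cons a s ha ih =>
    rw [Finset.noncommProd_cons, Finset.noncommProd_cons, Finset.prod_cons,
      ih (h.mono (by simp)) (h2.mono (by simp)), smul_mul_assoc, mul_smul_comm,
      smul_smul]

lemma inner_sum (n : ℕ) (cc : Fin n → ℂ) (Z : Fin n → UEA A L)
    (hZ : ∀ v w, Commute (Z v) (Z w)) (j : ℕ) :
    (∑ᶠ (ψ : Fin n → ℕ) (_ : ∑ v, ψ v = j),
        Finset.univ.noncommProd (fun v => (cc v ^ ψ v) • dp A L (Z v) (ψ v))
          (fun v _ w _ _ =>
            ((commute_dp_of_commute A L (hZ v w) _ _).smul_left _).smul_right _))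
      = dp A L (∑ v, cc v • Z v) j := by
  classical
  rw [finsum_cond_eq_sum_of_cond_iff
    (t := Finset.piAntidiag Finset.univ j) _
    (fun {ψ} _ => by
      rw [Finset.mem_piAntidiag]
      exact ⟨fun h => ⟨h, fun i _ => Finset.mem_univ i⟩, fun h => h.1⟩)]
  unfold dp
  rw [Finset.sum_pow_eq_sum_piAntidiag_of_commute Finset.univ (fun v => cc v • Z v)
    (fun v _ w _ _ => ((hZ v w).smul_left _).smul_right _) j, Finset.smul_sum]
  refine Finset.sum_congr rfl fun k hk => ?_
  have hks : ∑ v, k v = j := (Finset.mem_piAntidiag.mp hk).1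
  have hcomm : ((Finset.univ : Finset (Fin n)) : Set (Fin n)).Pairwise
      (Function.onFun Commute fun v => Z v ^ k v) :=
    fun v _ w _ _ => (hZ v w).pow_pow _ _
  simp only [smul_smul]
  rw [noncommProd_smul A L Finset.univ _ _ _ hcomm]
  simp only [smul_pow, noncommProd_smul A L Finset.univ _ _ _ hcomm]
  rw [← nsmul_eq_mul, ← Nat.cast_smul_eq_nsmul ℂ, smul_smul]
  refine Eq.trans ?_ (congrArg (fun u => ((j.factorial : ℂ)⁻¹ * (Nat.multinomial Finset.univ k : ℂ)) • u)
    (noncommProd_smul A L Finset.univ (fun x => cc x ^ k x) (fun x => Z x ^ k x) _ hcomm).symm)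
  rw [smul_smul]
  congr 1
  have hm : ((∏ v, ((k v).factorial) : ℕ) : ℂ) * ((Nat.multinomial Finset.univ k : ℕ) : ℂ)
      = ((j.factorial : ℕ) : ℂ) := by
    rw [← Nat.cast_mul, Nat.multinomial_spec, hks]
  have hP : (∏ v, (((k v).factorial : ℂ))) ≠ 0 :=
    Finset.prod_ne_zero_iff.mpr fun v _ => Nat.cast_ne_zero.mpr (k v).factorial_ne_zero
  have hj0 : ((j.factorial : ℂ)) ≠ 0 := Nat.cast_ne_zero.mpr j.factorial_ne_zero
  rw [Finset.prod_mul_distrib, Finset.prod_inv_distrib]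
  push_cast at hm ⊢
  field_simp
  linear_combination (-(∏ v, cc v ^ k v)) * hm
/-- straightening identity for `(x ⊗ a)^{(r)} (y ⊗ b)^{(s)}` when
`⁅x, y⁆ = ∑_v c_v z_v` with all the `z_v` central among `x, y, z₁, …, z_t`. -/
theorem stmt8 (t : ℕ) (x y : L) (z : Fin t → L) (c : Fin t → ℤ)
    (hxy : ⁅x, y⁆ = ∑ v, c v • z v)
    (hxz : ∀ v, ⁅x, z v⁆ = 0) (hyz : ∀ v, ⁅y, z v⁆ = 0)
    (hzz : ∀ v w, ⁅z v, z w⁆ = 0)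
    (a b : A) (r s : ℕ) :
    dp A L (emb A L x a) r * dp A L (emb A L y b) s =
      ∑ j ∈ Finset.range (min r s + 1),
        dp A L (emb A L y b) (s - j) *
          (∑ᶠ (ψ : Fin t → ℕ) (_ : ∑ v, ψ v = j),
            Finset.univ.noncommProd
              (fun v => ((c v : ℂ) ^ ψ v) • dp A L (emb A L (z v) (a * b)) (ψ v))
              (fun v _ w _ _ => commute_smul_dp' A L (hzz v w) _ _ _ _ _ _)) *
          dp A L (emb A L x a) (r - j) := by
  classical
  have hxy' : ⁅x, y⁆ = ∑ v, ((c v : ℂ)) • z v := by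
    rw [hxy]
    exact Finset.sum_congr rfl fun v _ => (Int.cast_smul_eq_zsmul ℂ (c v) (z v)).symm
  set X := emb A L x a with hX
  set Y := emb A L y b with hY
  set W : UEA A L := ∑ v, (c v : ℂ) • emb A L (z v) (a * b) with hWdef
  have hW : X * Y = Y * X + W := by
    have h1 : X * Y - Y * X
        = UniversalEnvelopingAlgebra.ι ℂ ⁅a ⊗ₜ[ℂ] x, b ⊗ₜ[ℂ] y⁆ := by
      rw [LieHom.map_lie, Ring.lie_def]
      rfl
    rw [LieAlgebra.ExtendScalars.bracket_tmul, hxy', TensorProduct.tmul_sum] at h1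
    have h2 : ∀ v : Fin t, ((a * b) ⊗ₜ[ℂ] (((c v : ℂ)) • z v) : A ⊗[ℂ] L)
        = (c v : ℂ) • ((a * b) ⊗ₜ[ℂ] z v) := fun v => TensorProduct.tmul_smul _ _ _
    simp only [h2] at h1
    have h4 : UniversalEnvelopingAlgebra.ι ℂ
        (∑ v, (c v : ℂ) • ((a * b) ⊗ₜ[ℂ] z v) : A ⊗[ℂ] L) = W := by
      rw [← LieHom.coe_toLinearMap, map_sum]
      exact Finset.sum_congr rfl fun v _ => by rw [map_smul]; rfl
    rw [h4] at h1
    rw [sub_eq_iff_eq_add] at h1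
    rw [h1, add_comm]
  have hXW : Commute X W :=
    Commute.sum_right _ _ _ fun v _ => ((commute_emb A L (hxz v) a (a * b)).smul_right _)
  have hYW : Commute Y W :=
    Commute.sum_right _ _ _ fun v _ => ((commute_emb A L (hyz v) b (a * b)).smul_right _)
  rw [dp_straight A L X Y W hW hXW hYW r s]
  refine Finset.sum_congr rfl fun j hj => ?_
  congr 2
  exact (inner_sum A L t (fun v => (c v : ℂ)) (fun v => emb A L (z v) (a * b))
    (fun v w => commute_emb A L (hzz v w) _ _) j).symm

end MapSuper
end
end
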